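/- The IBDTW cost lower bounds the minimal 1-stress over warping paths: if for each pair (i, j) the entry C_{ij} is the constrained L1 DTW distance between row i of the distance matrix of X and row j of the distance matrix of Y (constrained to warping paths through (i, j)), then (1/2)·min over warping paths W of Σ_{(i,j) ∈ W} C_{ij} is at most min over warping paths W of S_1(X, Y, W), where S_1(X, Y, W) = Σ over unordered pairs (x_i, y_j), (x', y') ∈ W of |d_X(x_i, x') − d_Y(y_j, y')|. -/

import Mathlib

/-- A valid step of a warping path: advance by (0,1), (1,0), or (1,1). -/
def WPStep (c c' : ℕ × ℕ) : Prop :=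
  c' = (c.1, c.2 + 1) ∨ c' = (c.1 + 1, c.2) ∨ c' = (c.1 + 1, c.2 + 1)

/-- A warping path from `(a, b)` to `(M, N)`: a nonempty sequence of index pairs starting at
`(a, b)`, ending at `(M, N)`, with consecutive differences in {(0,1), (1,0), (1,1)}. -/
def IsWarpingPathFromTo (a b M N : ℕ) (w : List (ℕ × ℕ)) : Prop :=
  w ≠ [] ∧ w.head? = some (a, b) ∧ w.getLast? = some (M, N) ∧ List.Chain' WPStep w

/-- A warping path between `{1,...,M}` and `{1,...,N}`. -/
def IsWarpingPath (M N : ℕ) (w : List (ℕ × ℕ)) : Prop :=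
  IsWarpingPathFromTo 1 1 M N w

/-- The L1 DTW distance between real sequences `A` (length `M`) and `B` (length `N`),
constrained to warping paths containing the pair `(i, j)`. -/
noncomputable def ConstrainedDTW1 (A B : ℕ → ℝ) (M N i j : ℕ) : ℝ :=
  sInf {c | ∃ w : List (ℕ × ℕ), IsWarpingPath M N w ∧ (i, j) ∈ w ∧
    c = (w.map fun p => |A p.1 - B p.2|).sum}

/-- The 1-stress of a warping path `w` (sum over unordered pairs of distinct positions of
the path of the distance distortions). -/
noncomputable def OneStress {X Y : Type*} [PseudoMetricSpace X] [PseudoMetricSpace Y]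
    (x : ℕ → X) (y : ℕ → Y) (w : List (ℕ × ℕ)) : ℝ :=
  ∑ p ∈ (Finset.range w.length ×ˢ Finset.range w.length).filter (fun p => p.1 < p.2),
    |dist (x (w.getD p.1 (0, 0)).1) (x (w.getD p.2 (0, 0)).1) -
      dist (y (w.getD p.1 (0, 0)).2) (y (w.getD p.2 (0, 0)).2)|


/-!
For `(i, j)` on a warping path `W`, the path `W` itself is admissible in the constrained DTW
defining `C i j`, so `C i j ≤ ∑_{(k, l) ∈ W} |d_X(x_i, x_k) - d_Y(y_j, y_l)|`. Summing over
`(i, j) ∈ W` gives the double sum over ordered pairs of positions of `W`, which is twice the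
1-stress because the summand is symmetric and vanishes on the diagonal.
-/

lemma Finset.sum_product_self_eq_two_nsmul_sum_lt {α β : Type*} [LinearOrder α]
    [AddCommMonoid β] (s : Finset α) (f : α × α → β) (hsymm : ∀ p, f p.swap = f p)
    (hdiag : ∀ a, f (a, a) = 0) :
    ∑ p ∈ s ×ˢ s, f p = 2 • ∑ p ∈ (s ×ˢ s).filter (fun p => p.1 < p.2), f p := by
  have hswap : ∑ p ∈ (s ×ˢ s).filter (fun p => p.2 < p.1), f p
      = ∑ p ∈ (s ×ˢ s).filter (fun p => p.1 < p.2), f p :=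
    Finset.sum_nbij' Prod.swap Prod.swap (by simp +contextual) (by simp +contextual)
      (by simp) (by simp) (fun p _ => (hsymm p).symm)
  have hoff_diag : ∑ p ∈ (s ×ˢ s).filter (fun p => ¬ p.1 < p.2), f p
      = ∑ p ∈ (s ×ˢ s).filter (fun p => p.2 < p.1), f p := by
    refine (Finset.sum_subset (fun p => by simp +contextual [le_of_lt]) fun p hp hnp => ?_).symm
    simp only [Finset.mem_filter, not_lt, not_and] at hp hnp
    rw [← Prod.mk.eta (p := p), le_antisymm hp.2 (hnp hp.1), hdiag]
  rw [← Finset.sum_filter_add_sum_filter_not _ (fun p => p.1 < p.2), hoff_diag, hswap, two_nsmul]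

lemma List.sum_map_eq_sum_range_getD {α β : Type*} [AddCommMonoid β] (w : List α) (d : α)
    (g : α → β) :
    (w.map g).sum = ∑ k ∈ Finset.range w.length, g (w.getD k d) := by
  induction w with
  | nil => simp
  | cons a t ih => simp [Finset.sum_range_succ', ih, add_comm]

lemma sInf_le_mul_sInf_of_le_mul {ι : Type*} {P : ι → Prop} {f g : ι → ℝ} {a : ℝ} (ha : 0 < a)
    (hf : ∀ i, P i → 0 ≤ f i) (hfg : ∀ i, P i → f i ≤ a * g i) :
    sInf {c | ∃ i, P i ∧ c = f i} ≤ a * sInf {c | ∃ i, P i ∧ c = g i} := by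
  by_cases hP : ∃ i, P i
  · obtain ⟨i₀, hi₀⟩ := hP
    have hbdd : BddBelow {c | ∃ i, P i ∧ c = f i} := ⟨0, by rintro _ ⟨i, hi, rfl⟩; exact hf i hi⟩
    rw [← div_le_iff₀' ha]
    refine le_csInf ⟨g i₀, i₀, hi₀, rfl⟩ ?_
    rintro _ ⟨i, hi, rfl⟩
    rw [div_le_iff₀' ha]
    exact (csInf_le hbdd ⟨i, hi, rfl⟩).trans (hfg i hi)
  · -- both sets are empty, and `sInf ∅ = 0` on `ℝ`
    simp [not_exists.mp hP]

section DTW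

variable {A B : ℕ → ℝ} {M N i j : ℕ}

lemma sum_map_abs_sub_nonneg (w : List (ℕ × ℕ)) : 0 ≤ (w.map fun p => |A p.1 - B p.2|).sum :=
  List.sum_nonneg <| List.forall_mem_map.2 fun _ _ => abs_nonneg _

lemma constrainedDTW1_nonneg : 0 ≤ ConstrainedDTW1 A B M N i j :=
  Real.sInf_nonneg <| by
    rintro _ ⟨w, -, -, rfl⟩
    exact sum_map_abs_sub_nonneg w

lemma constrainedDTW1_le {w : List (ℕ × ℕ)} (hw : IsWarpingPath M N w) (hij : (i, j) ∈ w) :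
    ConstrainedDTW1 A B M N i j ≤ (w.map fun p => |A p.1 - B p.2|).sum :=
  csInf_le ⟨0, by rintro _ ⟨w, -, -, rfl⟩; exact sum_map_abs_sub_nonneg w⟩ ⟨w, hw, hij, rfl⟩

end DTW

section Stress

variable {X Y : Type*} [PseudoMetricSpace X] [PseudoMetricSpace Y] (x : ℕ → X) (y : ℕ → Y)

lemma two_mul_oneStress (w : List (ℕ × ℕ)) :
    2 * OneStress x y w =
      (w.map fun p => (w.map fun q => |dist (x p.1) (x q.1) - dist (y p.2) (y q.2)|).sum).sum := by
  simp only [List.sum_map_eq_sum_range_getD w (0, 0)]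
  rw [← Finset.sum_product', Finset.sum_product_self_eq_two_nsmul_sum_lt _ _
    (fun _ => by rw [Prod.fst_swap, Prod.snd_swap, dist_comm (x _), dist_comm (y _)])
    (fun _ => by simp),
    nsmul_eq_mul, Nat.cast_ofNat, OneStress]

lemma sum_constrainedDTW1_le_two_mul_oneStress {M N : ℕ} {w : List (ℕ × ℕ)}
    (hw : IsWarpingPath M N w) :
    (w.map fun p => ConstrainedDTW1 (fun k => dist (x p.1) (x k)) (fun l => dist (y p.2) (y l))
      M N p.1 p.2).sum ≤ 2 * OneStress x y w :=
  two_mul_oneStress x y w ▸ List.sum_le_sum fun _ hp => constrainedDTW1_le hw hp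

end Stress

theorem ibdtw_lower_bounds_one_stress_general {X Y : Type*} [PseudoMetricSpace X] [PseudoMetricSpace Y]
    (x : ℕ → X) (y : ℕ → Y) (M N : ℕ)
    (C : ℕ → ℕ → ℝ)
    (hC : ∀ i j, C i j =
      ConstrainedDTW1 (fun k => dist (x i) (x k)) (fun l => dist (y j) (y l)) M N i j) :
    (1 / 2) * sInf {c | ∃ w : List (ℕ × ℕ), IsWarpingPath M N w ∧
        c = (w.map fun p => C p.1 p.2).sum} ≤
      sInf {s | ∃ w : List (ℕ × ℕ), IsWarpingPath M N w ∧ s = OneStress x y w} := by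
  simp only [hC]
  have := sInf_le_mul_sInf_of_le_mul (P := IsWarpingPath M N) two_pos
    (fun _ _ => List.sum_nonneg <| List.forall_mem_map.2 fun _ _ => constrainedDTW1_nonneg)
    (fun _ hw => sum_constrainedDTW1_le_two_mul_oneStress x y hw)
  linarith

/-- IBDTW lower bounds the minimal 1-stress over warping paths.  Here
`C i j` is the constrained L1 DTW between row `i` of the SSM of `X` and row `j` of the
SSM of `Y`. -/
theorem ibdtw_lower_bounds_one_stress {X Y : Type*} [PseudoMetricSpace X] [PseudoMetricSpace Y]
    (x : ℕ → X) (y : ℕ → Y) (M N : ℕ) (hM : 1 ≤ M) (hN : 1 ≤ N)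
    (C : ℕ → ℕ → ℝ)
    (hC : ∀ i j, C i j =
      ConstrainedDTW1 (fun k => dist (x i) (x k)) (fun l => dist (y j) (y l)) M N i j) :
    (1 / 2) * sInf {c | ∃ w : List (ℕ × ℕ), IsWarpingPath M N w ∧
        c = (w.map fun p => C p.1 p.2).sum} ≤
      sInf {s | ∃ w : List (ℕ × ℕ), IsWarpingPath M N w ∧ s = OneStress x y w} :=
  ibdtw_lower_bounds_one_stress_general x y M N C hC
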